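/- Negative-weight adversary upper bound for ordered search: let n ≥ 2 and let γ_1,…,γ_n be arbitrary real numbers (not necessarily nonnegative) such that the spectral norm of the n×n symmetric Toeplitz matrix Toeplitz(γ_n,…,γ_1) is at most 1. Then γ_n + 2∑_{i=1}^{n−1} γ_i ≤ 2 ∑_{k=0}^{n−1} ξ_k² + 1. -/

import Mathlib

/-- `ξ i = C(2i, i) / 4^i`. -/
noncomputable def xi (i : ℕ) : ℝ := (Nat.choose (2 * i) i : ℝ) / 4 ^ i

/-- `toeplitz n γ` is the `n×n` symmetric Toeplitz matrix `Toeplitz(γ_n, …, γ_1)` whose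
`(i,j)` entry (for `1 ≤ i, j ≤ n`) is `γ_{n − |i−j|}`. -/
def toeplitz (n : ℕ) (γ : ℕ → ℝ) : Matrix (Fin n) (Fin n) ℝ :=
  Matrix.of fun i j => γ (n - (max (i : ℕ) (j : ℕ) - min (i : ℕ) (j : ℕ)))

/-- The spectral norm (largest singular value) of a real matrix, as the operator norm
of its action on Euclidean space. -/
noncomputable def sNorm {n : ℕ} (M : Matrix (Fin n) (Fin n) ℝ) : ℝ :=
  ‖Matrix.toEuclideanCLM (𝕜 := ℝ) M‖

/-!
The witness is `W i j = ξ_{min(i,j)} ξ_{n-1-max(i,j)}`. By the identity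
`∑_{i+j=m} C(2i,i) C(2j,j) = 4^m`, i.e. `∑_{i+j=m} ξ_i ξ_j = 1`, every diagonal of `W` sums to
one, so pairing `W` with the Toeplitz matrix gives exactly `γ_n + 2 ∑_{0<i<n} γ_i`, and `tr W = 1`.

With `u i = ξ_i` and `v i = ξ_{n-1-i}` we have `W + (½ (u - v)(u - v)ᵀ + S) = ½ (u + v)(u + v)ᵀ`,
where `S i j = v_{min(i,j)} u_{max(i,j)}`. Since `u / v` is antitone, `S` is a nonnegative
combination of the rank-one matrices `(v 1_{≤c})(v 1_{≤c})ᵀ`, hence positive semidefinite.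
If `‖M‖ ≤ 1` and `W + N = P` with `N, P ⪰ 0`, then `∑ M_ij W_ij ≤ tr P + tr N = 2 tr P - tr W`,
which here is `‖u + v‖² - 1 = 2 ∑ ξ_k² + 1`.
-/

open Finset Matrix

theorem Finset.sum_Ico_sub' {M : Type*} [AddCommGroup M] (f : ℕ → M) {m n : ℕ} (h : m ≤ n) :
    ∑ c ∈ Ico m n, (f c - f (c + 1)) = f m - f n := by
  rw [← neg_sub, ← sum_Ico_sub f h, ← sum_neg_distrib]
  simp only [neg_sub]

namespace Matrix

variable {ι : Type*} [Fintype ι]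

theorem sum_mul_vecMulVec_self (M : Matrix ι ι ℝ) (x : ι → ℝ) :
    ∑ i, ∑ j, M i j * vecMulVec x x i j = x ⬝ᵥ M *ᵥ x := by
  simp only [vecMulVec_apply, dotProduct, mulVec, mul_sum]
  exact sum_congr rfl fun i _ => sum_congr rfl fun j _ => by ring

variable [DecidableEq ι]

theorem abs_dotProduct_mulVec_self_le (M : Matrix ι ι ℝ) (x : ι → ℝ) :
    |x ⬝ᵥ M *ᵥ x| ≤ ‖toEuclideanCLM (𝕜 := ℝ) M‖ * (x ⬝ᵥ x) := by
  set y := WithLp.toLp 2 x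
  have hquad : x ⬝ᵥ M *ᵥ x = inner ℝ y (toEuclideanCLM (𝕜 := ℝ) M y) := by
    rw [toEuclideanCLM_toLp, EuclideanSpace.inner_eq_star_dotProduct]
    simp [y, dotProduct_comm]
  have hnorm : x ⬝ᵥ x = ‖y‖ ^ 2 := by
    rw [← real_inner_self_eq_norm_sq, EuclideanSpace.inner_eq_star_dotProduct]
    simp [y]
  rw [hquad, hnorm]
  calc |inner ℝ y (toEuclideanCLM (𝕜 := ℝ) M y)|
      ≤ ‖y‖ * ‖toEuclideanCLM (𝕜 := ℝ) M y‖ := abs_real_inner_le_norm _ _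
    _ ≤ ‖y‖ * (‖toEuclideanCLM (𝕜 := ℝ) M‖ * ‖y‖) := by
        gcongr
        exact ContinuousLinearMap.le_opNorm _ _
    _ = ‖toEuclideanCLM (𝕜 := ℝ) M‖ * ‖y‖ ^ 2 := by ring

theorem abs_sum_mul_le_of_posSemidef (M : Matrix ι ι ℝ) {N : Matrix ι ι ℝ}
    (hN : N.PosSemidef) :
    |∑ i, ∑ j, M i j * N i j| ≤ ‖toEuclideanCLM (𝕜 := ℝ) M‖ * N.trace := by
  obtain ⟨m, v, rfl⟩ := posSemidef_iff_eq_sum_vecMulVec.mp hN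
  have hpair : ∑ i, ∑ j, M i j * (∑ k, vecMulVec (v k) (star (v k))) i j
      = ∑ k, v k ⬝ᵥ M *ᵥ v k := by
    simp only [star_trivial, sum_apply, mul_sum, ← sum_mul_vecMulVec_self]
    rw [sum_congr rfl fun i _ => sum_comm, sum_comm]
  have htrace : (∑ k, vecMulVec (v k) (star (v k))).trace = ∑ k, v k ⬝ᵥ v k := by
    simp only [trace_sum, star_trivial, trace_vecMulVec]
  rw [hpair, htrace, mul_sum]
  exact (abs_sum_le_sum_abs _ _).trans
    (sum_le_sum fun k _ => abs_dotProduct_mulVec_self_le M (v k))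

theorem sum_mul_le_of_add_eq_of_posSemidef {M W N P : Matrix ι ι ℝ}
    (hM : ‖toEuclideanCLM (𝕜 := ℝ) M‖ ≤ 1) (hN : N.PosSemidef) (hP : P.PosSemidef)
    (hWNP : W + N = P) :
    ∑ i, ∑ j, M i j * W i j ≤ 2 * P.trace - W.trace := by
  have hW : W = P - N := eq_sub_of_add_eq hWNP
  have hpair : ∑ i, ∑ j, M i j * W i j
      = ∑ i, ∑ j, M i j * P i j - ∑ i, ∑ j, M i j * N i j := by
    simp only [hW, sub_apply, mul_sub, sum_sub_distrib]
  have hPM : ∑ i, ∑ j, M i j * P i j ≤ P.trace :=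
    (abs_le.mp (abs_sum_mul_le_of_posSemidef M hP)).2.trans
      (mul_le_of_le_one_left hP.trace_nonneg hM)
  have hNM : -N.trace ≤ ∑ i, ∑ j, M i j * N i j :=
    (neg_le_neg (mul_le_of_le_one_left hN.trace_nonneg hM)).trans
      (abs_le.mp (abs_sum_mul_le_of_posSemidef M hN)).1
  have htrace : W.trace = P.trace - N.trace := by rw [hW, trace_sub]
  linarith

theorem posSemidef_of_antitone_max {n : ℕ} (v : Fin n → ℝ) {f : ℕ → ℝ}
    (hf : Antitone f) (hfn : 0 ≤ f n) :
    (of fun i j : Fin n => v i * v j * f (max (i : ℕ) j)).PosSemidef := by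
  set β : ℕ → Fin n → ℝ := fun c i => if (i : ℕ) ≤ c then v i else 0
  -- `f (max i j) = f n + ∑_{max i j ≤ c < n} (f c - f (c + 1))` and `max i j ≤ c ↔ i ≤ c ∧ j ≤ c`
  have hdecomp : of (fun i j : Fin n => v i * v j * f (max (i : ℕ) j))
      = f n • vecMulVec v v + ∑ c ∈ range n, (f c - f (c + 1)) • vecMulVec (β c) (β c) := by
    ext i j
    have hfilter :
        (range n).filter (fun c => max (i : ℕ) j ≤ c) = Ico (max (i : ℕ) j) n := by
      ext c
      simp only [mem_filter, mem_range, mem_Ico]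
      omega
    have hsummand (c : ℕ) : (f c - f (c + 1)) * (β c i * β c j)
        = if max (i : ℕ) j ≤ c then (f c - f (c + 1)) * (v i * v j) else 0 := by
      simp only [β, max_le_iff]
      split_ifs <;> simp_all
    simp only [of_apply, add_apply, smul_apply, sum_apply, vecMulVec_apply, smul_eq_mul,
      hsummand, ← sum_filter, hfilter, ← sum_mul, sum_Ico_sub' f (max_le i.2.le j.2.le)]
    ring
  rw [hdecomp]
  refine ((posSemidef_vecMulVec_self_star v).smul hfn).add
    (posSemidef_sum _ fun c _ => (posSemidef_vecMulVec_self_star (β c)).smul ?_)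
  exact sub_nonneg.mpr (hf c.le_succ)

end Matrix

def minMaxMatrix (n : ℕ) (a b : ℕ → ℝ) : Matrix (Fin n) (Fin n) ℝ :=
  of fun i j => a (min (i : ℕ) j) * b (max (i : ℕ) j)

theorem trace_minMaxMatrix (n : ℕ) (a b : ℕ → ℝ) :
    (minMaxMatrix n a b).trace = ∑ i ∈ range n, a i * b i := by
  simp [trace, minMaxMatrix, Fin.sum_univ_eq_sum_range (fun i => a i * b i)]

theorem minMaxMatrix_add_eq (n : ℕ) (a b : ℕ → ℝ) :
    minMaxMatrix n a b
      + ((1 / 2 : ℝ) • vecMulVec (fun i : Fin n => a i - b i) (fun i : Fin n => a i - b i)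
        + minMaxMatrix n b a)
      = (1 / 2 : ℝ) • vecMulVec (fun i : Fin n => a i + b i) (fun i : Fin n => a i + b i) := by
  ext i j
  simp only [minMaxMatrix, Matrix.add_apply, Matrix.smul_apply, of_apply, vecMulVec_apply,
    smul_eq_mul]
  rcases le_total (i : ℕ) j with h | h
  · simp only [min_eq_left h, max_eq_right h]
    ring
  · simp only [min_eq_right h, max_eq_left h]
    ring

theorem posSemidef_minMaxMatrix (n : ℕ) {a b : ℕ → ℝ} (ha : ∀ k, 0 < a k)
    (hba : Antitone fun k => b k / a k) (hb : 0 ≤ b n) :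
    (minMaxMatrix n a b).PosSemidef := by
  convert posSemidef_of_antitone_max (fun i : Fin n => a i) hba (div_nonneg hb (ha n).le)
    using 1
  ext i j
  have hai := (ha i).ne'
  have haj := (ha j).ne'
  simp only [minMaxMatrix, of_apply]
  rcases le_total (i : ℕ) j with h | h
  · simp only [min_eq_left h, max_eq_right h]
    field_simp
  · simp only [min_eq_right h, max_eq_left h]
    field_simp

theorem Nat.sum_antidiagonal_centralBinom_mul (m : ℕ) :
    ∑ p ∈ antidiagonal m, p.1.centralBinom * p.2.centralBinom = 4 ^ m := by
  set S := fun k : ℕ => ∑ p ∈ antidiagonal k, p.1.centralBinom * p.2.centralBinom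
  have hsymm (k : ℕ) :
      2 * ∑ p ∈ antidiagonal k, p.1 * (p.1.centralBinom * p.2.centralBinom) = k * S k := by
    rw [two_mul]
    nth_rw 2 [← Nat.sum_antidiagonal_swap]
    rw [← sum_add_distrib, mul_sum]
    refine sum_congr rfl fun p hp => ?_
    rw [HasAntidiagonal.mem_antidiagonal] at hp
    simp only [Prod.fst_swap, Prod.snd_swap, ← hp]
    ring
  have hshift (k : ℕ) :
      ∑ p ∈ antidiagonal (k + 1), p.1 * (p.1.centralBinom * p.2.centralBinom)
        = 2 * ∑ p ∈ antidiagonal k, (2 * p.1 + 1) * (p.1.centralBinom * p.2.centralBinom) := by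
    rw [Nat.sum_antidiagonal_succ, mul_sum]
    simp only [zero_mul, zero_add, ← mul_assoc, Nat.succ_mul_centralBinom_succ]
  induction m with
  | zero => simp
  | succ m ih =>
    have hstep : (m + 1) * S (m + 1) = (m + 1) * (4 * S m) := by
      rw [← hsymm, hshift]
      simp only [add_mul, one_mul, sum_add_distrib, mul_assoc, ← mul_sum]
      rw [hsymm m]
      ring
    change S (m + 1) = _
    rw [Nat.eq_of_mul_eq_mul_left m.succ_pos hstep, show S m = 4 ^ m from ih, pow_succ, mul_comm]

theorem xi_eq_centralBinom_div (i : ℕ) : xi i = i.centralBinom / 4 ^ i := rfl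

theorem xi_pos (i : ℕ) : 0 < xi i := by
  rw [xi_eq_centralBinom_div]
  exact div_pos (mod_cast i.centralBinom_pos) (by positivity)

theorem xi_succ (i : ℕ) : xi (i + 1) = (2 * i + 1) / (2 * i + 2) * xi i := by
  have h : ((i + 1 : ℕ) : ℝ) * (i + 1).centralBinom = 2 * (2 * i + 1) * i.centralBinom := by
    exact_mod_cast i.succ_mul_centralBinom_succ
  rw [xi_eq_centralBinom_div, xi_eq_centralBinom_div, pow_succ]
  field_simp
  push_cast at h
  linear_combination 2 * h

theorem xi_antitone : Antitone xi := by
  refine antitone_nat_of_succ_le fun i => ?_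
  rw [xi_succ]
  refine mul_le_of_le_one_left (xi_pos i).le ?_
  rw [div_le_one (by positivity)]
  linarith

theorem sum_range_xi_mul_xi (m : ℕ) : ∑ i ∈ range (m + 1), xi i * xi (m - i) = 1 := by
  calc ∑ i ∈ range (m + 1), xi i * xi (m - i)
      = ∑ i ∈ range (m + 1), (i.centralBinom * (m - i).centralBinom : ℝ) / 4 ^ m := by
        refine sum_congr rfl fun i hi => ?_
        rw [xi_eq_centralBinom_div, xi_eq_centralBinom_div, div_mul_div_comm, ← pow_add,
          Nat.add_sub_cancel' (Nat.le_of_lt_succ (mem_range.mp hi))]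
    _ = ((∑ p ∈ antidiagonal m, p.1.centralBinom * p.2.centralBinom : ℕ) : ℝ) / 4 ^ m := by
        rw [Nat.sum_antidiagonal_eq_sum_range_succ (fun i j => i.centralBinom * j.centralBinom)]
        push_cast
        rw [sum_div]
    _ = 1 := by
        rw [Nat.sum_antidiagonal_centralBinom_mul]
        push_cast
        exact div_self (by positivity)

theorem sum_range_xi_mul_xi_sub {n d : ℕ} (hd : d < n) :
    ∑ i ∈ range (n - d), xi i * xi (n - 1 - d - i) = 1 := by
  rw [show n - d = n - 1 - d + 1 by omega]
  exact sum_range_xi_mul_xi _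

theorem sum_range_xi_mul_xi_rev {n : ℕ} (hn : 0 < n) :
    ∑ i ∈ range n, xi i * xi (n - 1 - i) = 1 := by
  simpa using sum_range_xi_mul_xi_sub hn

theorem dotProduct_xi_add_xi_rev {n : ℕ} (hn : 0 < n) :
    (fun i : Fin n => xi i + xi (n - 1 - i)) ⬝ᵥ (fun i : Fin n => xi i + xi (n - 1 - i))
      = 2 * ∑ i ∈ range n, xi i ^ 2 + 2 := by
  have hrev : ∑ i ∈ range n, xi (n - 1 - i) ^ 2 = ∑ i ∈ range n, xi i ^ 2 :=
    sum_range_reflect (fun i => xi i ^ 2) n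
  have hsq (i : ℕ) : (xi i + xi (n - 1 - i)) * (xi i + xi (n - 1 - i))
      = xi i ^ 2 + xi (n - 1 - i) ^ 2 + 2 * (xi i * xi (n - 1 - i)) := by ring
  rw [dotProduct,
    Fin.sum_univ_eq_sum_range (fun i => (xi i + xi (n - 1 - i)) * (xi i + xi (n - 1 - i)))]
  simp only [hsq, sum_add_distrib, ← mul_sum, hrev, sum_range_xi_mul_xi_rev hn]
  ring

theorem antitone_xi_div_xi_rev (n : ℕ) : Antitone fun k => xi k / xi (n - 1 - k) :=
  fun _ _ hkl => div_le_div₀ (xi_pos _).le (xi_antitone hkl) (xi_pos _)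
    (xi_antitone (Nat.sub_le_sub_left hkl _))

theorem sum_range_sum_range_min_max (h : ℕ → ℕ → ℝ) (n : ℕ) :
    ∑ i ∈ range n, ∑ j ∈ range n, h (min i j) (max i j)
      = 2 * ∑ j ∈ range n, ∑ i ∈ range (j + 1), h i j - ∑ i ∈ range n, h i i := by
  induction n with
  | zero => simp
  | succ n ih =>
    have hrow : ∀ i ∈ range n, h (min i n) (max i n) = h i n := fun i hi => by
      rw [min_eq_left (mem_range.mp hi).le, max_eq_right (mem_range.mp hi).le]
    have hcol : ∀ j ∈ range n, h (min n j) (max n j) = h j n := fun j hj => by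
      rw [min_eq_right (mem_range.mp hj).le, max_eq_left (mem_range.mp hj).le]
    simp only [sum_range_succ, sum_add_distrib, ih, sum_congr rfl hrow, sum_congr rfl hcol,
      min_self, max_self]
    ring

theorem sum_toeplitz_mul_minMaxMatrix_xi {n : ℕ} (hn : 0 < n) (γ : ℕ → ℝ) :
    ∑ i, ∑ j, toeplitz n γ i j * minMaxMatrix n xi (fun k => xi (n - 1 - k)) i j
      = γ n + 2 * ∑ i ∈ Icc 1 (n - 1), γ i := by
  set h : ℕ → ℕ → ℝ := fun a b => γ (n - (b - a)) * (xi a * xi (n - 1 - b))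
  have hrange : ∑ i, ∑ j, toeplitz n γ i j * minMaxMatrix n xi (fun k => xi (n - 1 - k)) i j
      = ∑ i ∈ range n, ∑ j ∈ range n, h (min i j) (max i j) := by
    rw [← Fin.sum_univ_eq_sum_range (fun i => ∑ j ∈ range n, h (min i j) (max i j))]
    refine sum_congr rfl fun i _ => ?_
    rw [← Fin.sum_univ_eq_sum_range (fun j => h (min (i : ℕ) j) (max (i : ℕ) j))]
    rfl
  have hdiag : ∑ i ∈ range n, h i i = γ n := by
    simp only [h, Nat.sub_self, Nat.sub_zero, ← mul_sum, sum_range_xi_mul_xi_rev hn, mul_one]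
  have htri : ∑ j ∈ range n, ∑ i ∈ range (j + 1), h i j = ∑ d ∈ range n, γ (n - d) := by
    set g : ℕ → ℕ → ℝ := fun d i => γ (n - d) * (xi i * xi (n - 1 - d - i))
    calc ∑ j ∈ range n, ∑ i ∈ range (j + 1), h i j
        = ∑ j ∈ range n, ∑ d ∈ range (j + 1), g d (j - d) := by
          refine sum_congr rfl fun j _ => ?_
          rw [← sum_range_reflect]
          refine sum_congr rfl fun d hd => ?_
          have hdj := mem_range.mp hd
          rw [show j + 1 - 1 - d = j - d by omega]
          simp only [h, g]
          rw [show j - (j - d) = d by omega, show n - 1 - d - (j - d) = n - 1 - j by omega]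
      _ = ∑ d ∈ range n, ∑ i ∈ range (n - d), g d i := sum_range_diag_flip n g
      _ = ∑ d ∈ range n, γ (n - d) := sum_congr rfl fun d hd => by
          simp only [g, ← mul_sum, sum_range_xi_mul_xi_sub (mem_range.mp hd), mul_one]
  have hreflect : ∑ d ∈ range n, γ (n - d) = ∑ i ∈ Icc 1 n, γ i := by
    rw [range_eq_Ico, sum_Ico_reflect γ 0 n.le_succ, Nat.sub_zero, Nat.add_sub_cancel_left,
      Finset.Ico_add_one_right_eq_Icc]
  obtain ⟨m, rfl⟩ := Nat.exists_eq_add_of_lt hn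
  rw [hrange, sum_range_sum_range_min_max, htri, hdiag, hreflect, sum_Icc_succ_top (by omega)]
  simp only [zero_add, Nat.add_sub_cancel]
  ring

/-- Negative-weight adversary upper bound for ordered search: for `n ≥ 2` and arbitrary
reals `γ_1, …, γ_n` (not necessarily nonnegative) with `‖Toeplitz(γ_n, …, γ_1)‖ ≤ 1`,
we have `γ_n + 2 ∑_{i=1}^{n−1} γ_i ≤ 2 ∑_{k=0}^{n−1} ξ_k² + 1`. -/
theorem negative_adversary_bound (n : ℕ) (hn : 2 ≤ n) (γ : ℕ → ℝ)
    (hnorm : sNorm (toeplitz n γ) ≤ 1) :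
    γ n + 2 * ∑ i ∈ Finset.Icc 1 (n - 1), γ i
      ≤ 2 * ∑ k ∈ Finset.range n, (xi k) ^ 2 + 1 := by
  have hn0 : 0 < n := by omega
  have hS : (minMaxMatrix n (fun k => xi (n - 1 - k)) xi).PosSemidef :=
    posSemidef_minMaxMatrix n (fun _ => xi_pos _) (antitone_xi_div_xi_rev n) (xi_pos n).le
  have hhalf : (0 : ℝ) ≤ 1 / 2 := by norm_num
  have hbound := sum_mul_le_of_add_eq_of_posSemidef hnorm
    (((posSemidef_vecMulVec_self_star _).smul hhalf).add hS)
    ((posSemidef_vecMulVec_self_star _).smul hhalf) (minMaxMatrix_add_eq n _ _)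
  simp only [sum_toeplitz_mul_minMaxMatrix_xi hn0, trace_minMaxMatrix, trace_smul,
    trace_vecMulVec, star_trivial, dotProduct_xi_add_xi_rev hn0, sum_range_xi_mul_xi_rev hn0,
    smul_eq_mul] at hbound
  linarith
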